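/- arXiv:2402.11864 — 6 statements merged into one kernel-verified Lean document; each statement's English description precedes it below -/
import Mathlib

section
/- For a Gaussian random variable Y ~ N(y, σ_Y²) and independent Gaussian Z ~ N(0, σ_Z²), with γ, σ_Y, σ_Z > 0 and μ, x, C ∈ ℝ, the expectation E[-exp(-γ(x - C + φ(Y)·(μ + Y + Z)))] with φ(Y) = (μ+Y)/(γσ_Z²) equals -exp(-γ(x-C) - (μ+y)²/(2(σ_Y²+σ_Z²)) - (1/2)·log(1 + σ_Y²/σ_Z²)). -/
/-!
Given the signal `Y = t`, the informed investor's wealth is affine in the Gaussian noise `Z`,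
so the Gaussian moment generating function turns the conditional expected utility into
`-exp (-γ (x - C)) * exp (-(μ + t)² / (2 σ_Z²))`. This is a Gaussian kernel in `t`; multiplied
by the density of `Y` it is, after completing the square, a constant multiple of another
Gaussian density, and that constant `(1 + σ_Y²/σ_Z²)^(-1/2) * exp (-(μ + y)² / (2 (σ_Y² + σ_Z²)))`
gives the claimed value. The conditional utility is bounded, which justifies Fubini.
-/

open MeasureTheory ProbabilityTheory Real

open scoped NNReal

section Cara

variable {m : ℝ} {v : ℝ≥0}

lemma integral_exp_mul_gaussianReal (t : ℝ) :
    ∫ x, rexp (t * x) ∂gaussianReal m v = rexp (m * t + v * t ^ 2 / 2) :=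
  congrFun mgf_fun_id_gaussianReal t

lemma exp_cara_eq_mul_exp (γ w θ a z : ℝ) :
    rexp (-γ * (w + θ * (a + z))) = rexp (-γ * (w + θ * a)) * rexp (-γ * θ * z) := by
  rw [← exp_add]; ring_nf

lemma integral_exp_cara_gaussianReal (γ w θ a : ℝ) :
    ∫ z, rexp (-γ * (w + θ * (a + z))) ∂gaussianReal m v
      = rexp (-γ * (w + θ * (a + m)) + v * (γ * θ) ^ 2 / 2) := by
  simp_rw [exp_cara_eq_mul_exp γ w θ a]
  rw [integral_const_mul, integral_exp_mul_gaussianReal, ← exp_add]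
  ring_nf

lemma integrable_exp_cara_gaussianReal (γ w θ a : ℝ) :
    Integrable (fun z ↦ rexp (-γ * (w + θ * (a + z)))) (gaussianReal m v) := by
  simp_rw [exp_cara_eq_mul_exp γ w θ a]
  exact (integrable_exp_mul_gaussianReal _).const_mul _

/-- `a / (γ v)` is Merton's position for an asset whose return has mean `a` and variance `v`. -/
lemma integral_exp_cara_merton_gaussianReal {γ : ℝ} (hγ : γ ≠ 0) (hv : v ≠ 0) (w a : ℝ) :
    ∫ z, rexp (-γ * (w + a / (γ * v) * (a + z))) ∂gaussianReal 0 v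
      = rexp (-γ * w) * rexp (-(1 / (2 * v)) * a ^ 2) := by
  have hv' : (v : ℝ) ≠ 0 := NNReal.coe_ne_zero.mpr hv
  rw [integral_exp_cara_gaussianReal, ← exp_add]
  congr 1
  field_simp
  ring

end Cara

lemma gaussianPDFReal_mul_exp_neg_sq {v : ℝ≥0} (hv : v ≠ 0) {k : ℝ} (hk : 0 ≤ k) (m d t : ℝ) :
    gaussianPDFReal m v t * rexp (-k * (d + t) ^ 2)
      = (√(1 + 2 * k * v))⁻¹ * rexp (-k * (d + m) ^ 2 / (1 + 2 * k * v))
        * gaussianPDFReal ((m - 2 * k * v * d) / (1 + 2 * k * v))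
            (v / (1 + 2 * k * v)).toNNReal t := by
  simp only [gaussianPDFReal, Real.coe_toNNReal _ (by positivity : 0 ≤ v / (1 + 2 * k * v))]
  have hsqrt : √(2 * π * (v / (1 + 2 * k * v))) = √(2 * π * v) / √(1 + 2 * k * v) := by
    rw [← sqrt_div (by positivity), mul_div_assoc]
  have hexp : -(t - m) ^ 2 / (2 * v) + -k * (d + t) ^ 2
      = -k * (d + m) ^ 2 / (1 + 2 * k * v)
        + -(t - (m - 2 * k * v * d) / (1 + 2 * k * v)) ^ 2 / (2 * (v / (1 + 2 * k * v))) := by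
    field_simp
    ring
  rw [hsqrt, mul_assoc, ← exp_add, hexp, exp_add]
  field_simp

lemma integral_exp_neg_sq_gaussianReal {v : ℝ≥0} (hv : v ≠ 0) {k : ℝ} (hk : 0 ≤ k) (m d : ℝ) :
    ∫ t, rexp (-k * (d + t) ^ 2) ∂gaussianReal m v
      = (√(1 + 2 * k * v))⁻¹ * rexp (-k * (d + m) ^ 2 / (1 + 2 * k * v)) := by
  have hv' : (v / (1 + 2 * k * v)).toNNReal ≠ 0 :=
    (Real.toNNReal_pos.mpr (by positivity)).ne'
  rw [integral_gaussianReal_eq_integral_smul hv]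
  simp_rw [smul_eq_mul, gaussianPDFReal_mul_exp_neg_sq hv hk m d]
  rw [integral_const_mul, integral_gaussianPDFReal_eq_one _ hv', mul_one]

theorem integral_cara_informed_gaussianReal {γ : ℝ} (hγ : γ ≠ 0) {vY vZ : ℝ≥0} (hvY : vY ≠ 0)
    (hvZ : vZ ≠ 0) (w μ y : ℝ) :
    ∫ p : ℝ × ℝ, -rexp (-γ * (w + (μ + p.1) / (γ * vZ) * (μ + p.1 + p.2)))
        ∂(gaussianReal y vY).prod (gaussianReal 0 vZ)
      = -(rexp (-γ * w) * ((√(1 + vY / vZ))⁻¹ * rexp (-(μ + y) ^ 2 / (2 * (vY + vZ))))) := by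
  have hk : 0 ≤ 1 / (2 * (vZ : ℝ)) := by positivity
  have hcond := integral_exp_cara_merton_gaussianReal hγ hvZ w
  have hint : Integrable (fun p : ℝ × ℝ ↦ -rexp (-γ * (w + (μ + p.1) / (γ * vZ) * (μ + p.1 + p.2))))
      ((gaussianReal y vY).prod (gaussianReal 0 vZ)) := by
    refine (integrable_prod_iff (Continuous.aestronglyMeasurable (by fun_prop))).mpr
      ⟨.of_forall fun t ↦
        (integrable_exp_cara_gaussianReal γ w ((μ + t) / (γ * vZ)) (μ + t)).fun_neg, ?_⟩
    simp only [norm_neg, Real.norm_eq_abs, abs_exp, hcond]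
    refine .of_bound (Continuous.aestronglyMeasurable (by fun_prop)) (rexp (-γ * w))
      (.of_forall fun t ↦ ?_)
    have hdecay : rexp (-(1 / (2 * vZ)) * (μ + t) ^ 2) ≤ 1 :=
      exp_le_one_iff.mpr (by nlinarith [mul_nonneg hk (sq_nonneg (μ + t))])
    rw [norm_of_nonneg (by positivity)]
    exact mul_le_of_le_one_right (exp_pos _).le hdecay
  rw [integral_prod _ hint]
  simp only [integral_neg, hcond]
  rw [integral_const_mul, integral_exp_neg_sq_gaussianReal hvY hk]
  have hvZ' : (vZ : ℝ) ≠ 0 := NNReal.coe_ne_zero.mpr hvZ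
  congr 4
  · field_simp
  · field_simp
    ring

/-- Single-period informed investor: expected CARA utility with strategy
`φ(Y) = (μ+Y)/(γσ_Z²)` under `Y ~ N(y, σ_Y²)`, `Z ~ N(0, σ_Z²)` independent. -/
theorem informed_expected_utility
    (γ σY σZ μ x C y : ℝ) (hγ : 0 < γ) (hY : 0 < σY) (hZ : 0 < σZ) :
    ∫ p : ℝ × ℝ,
        (-Real.exp (-γ * (x - C + ((μ + p.1) / (γ * σZ ^ 2)) * (μ + p.1 + p.2))))
        ∂((gaussianReal y ⟨σY ^ 2, sq_nonneg σY⟩).prod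
            (gaussianReal 0 ⟨σZ ^ 2, sq_nonneg σZ⟩))
      = -Real.exp (-γ * (x - C) - (μ + y) ^ 2 / (2 * (σY ^ 2 + σZ ^ 2))
          - (1 / 2) * Real.log (1 + σY ^ 2 / σZ ^ 2)) := by
  have hvY : (⟨σY ^ 2, sq_nonneg σY⟩ : ℝ≥0) ≠ 0 :=
    NNReal.coe_ne_zero.mp (pow_pos hY 2).ne'
  have hvZ : (⟨σZ ^ 2, sq_nonneg σZ⟩ : ℝ≥0) ≠ 0 :=
    NNReal.coe_ne_zero.mp (pow_pos hZ 2).ne'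
  refine (integral_cara_informed_gaussianReal hγ.ne' hvY hvZ (x - C) μ y).trans ?_
  change -(rexp (-γ * (x - C)) * ((√(1 + σY ^ 2 / σZ ^ 2))⁻¹
    * rexp (-(μ + y) ^ 2 / (2 * (σY ^ 2 + σZ ^ 2))))) = _
  have hR : 0 < 1 + σY ^ 2 / σZ ^ 2 := by positivity
  rw [sqrt_eq_rpow, ← rpow_neg hR.le, rpow_def_of_pos hR, ← exp_add, ← exp_add]
  ring_nf
end

section
/- The unique solution on [0,T] of the linear ODE A'(t) = 1/(2σ_z²) + (2σ_y/σ_z)·tanh((σ_y/σ_z)t)·A(t) with terminal condition A(T) = 0 is A(t) = -sinh((σ_y/σ_z)(T-t))·cosh((σ_y/σ_z)t) / (2σ_yσ_z·cosh((σ_y/σ_z)T)). -/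
/-!
The candidate is verified by differentiating it, using the addition formulas and
`cosh² - sinh² = 1`. Uniqueness is Gronwall's: the right-hand side `a + p t * A` is Lipschitz
in `A` with constant `sup |p| ≤ 2σ_y/σ_z` because `|tanh| < 1`, so two solutions agreeing at
`t = T` agree on `[0, T]`.
-/

open Real Set NNReal

theorem lipschitzWith_const_add_mul (a p : ℝ) : LipschitzWith ‖p‖₊ fun x : ℝ => a + p * x :=
  LipschitzWith.of_dist_le_mul fun x y => by
    simp [Real.dist_eq, ← mul_sub, abs_mul]

theorem eqOn_Icc_of_hasDerivAt_affine_of_right_eq {q p f g : ℝ → ℝ} {a b : ℝ} {M : ℝ≥0}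
    (hp : ∀ t ∈ Ioc a b, ‖p t‖₊ ≤ M)
    (hf : ∀ t ∈ Icc a b, HasDerivAt f (q t + p t * f t) t)
    (hg : ∀ t ∈ Icc a b, HasDerivAt g (q t + p t * g t) t) (hb : f b = g b) :
    EqOn f g (Icc a b) :=
  ODE_solution_unique_of_mem_Icc_left (v := fun t x => q t + p t * x) (s := fun _ => univ)
    (fun t ht => ((lipschitzWith_const_add_mul _ _).weaken (hp t ht)).lipschitzOnWith)
    (fun t ht => (hf t ht).continuousAt.continuousWithinAt)
    (fun t ht => (hf t (Ioc_subset_Icc_self ht)).hasDerivWithinAt) (fun _ _ => mem_univ _)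
    (fun t ht => (hg t ht).continuousAt.continuousWithinAt)
    (fun t ht => (hg t (Ioc_subset_Icc_self ht)).hasDerivWithinAt) (fun _ _ => mem_univ _) hb

theorem hasDerivAt_neg_sinh_mul_cosh_div (c K T t : ℝ) (hK : K ≠ 0) :
    HasDerivAt (fun t => -sinh (c * (T - t)) * cosh (c * t) / (K * cosh (c * T)))
      (c / K + 2 * c * tanh (c * t) * (-sinh (c * (T - t)) * cosh (c * t) / (K * cosh (c * T))))
      t := by
  have hsinh : HasDerivAt (fun t => sinh (c * (T - t))) (cosh (c * (T - t)) * (c * (0 - 1))) t :=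
    (((hasDerivAt_const t T).sub (hasDerivAt_id t)).const_mul c).sinh
  have hcosh : HasDerivAt (fun t => cosh (c * t)) (sinh (c * t) * (c * 1)) t :=
    ((hasDerivAt_id t).const_mul c).cosh
  refine ((hsinh.neg.mul hcosh).div_const (K * cosh (c * T))).congr_deriv ?_
  have hcosh_ne := (cosh_pos (c * t)).ne'
  rw [Pi.neg_apply, tanh_eq_sinh_div_cosh, mul_sub, sinh_sub, cosh_sub]
  field_simp
  linear_combination c * cosh (c * T) * cosh_sq_sub_sinh_sq (c * t)

theorem nnnorm_mul_tanh_le (k x : ℝ) : ‖k * tanh x‖₊ ≤ ‖k‖₊ := by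
  rw [nnnorm_mul]
  refine mul_le_of_le_one_right' ?_
  rw [← NNReal.coe_le_coe, coe_nnnorm, Real.norm_eq_abs, NNReal.coe_one]
  exact (abs_tanh_lt_one x).le

theorem linear_ode_uninformed_A_general
    (σy σz T : ℝ) (hy : 0 < σy) (hz : 0 < σz) :
    (∀ t ∈ Icc (0 : ℝ) T,
      HasDerivAt
        (fun t : ℝ => -Real.sinh ((σy / σz) * (T - t)) * Real.cosh ((σy / σz) * t)
            / (2 * σy * σz * Real.cosh ((σy / σz) * T)))
        (1 / (2 * σz ^ 2) + (2 * σy / σz) * Real.tanh ((σy / σz) * t)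
          * (-Real.sinh ((σy / σz) * (T - t)) * Real.cosh ((σy / σz) * t)
              / (2 * σy * σz * Real.cosh ((σy / σz) * T)))) t) ∧
    (-Real.sinh ((σy / σz) * (T - T)) * Real.cosh ((σy / σz) * T)
        / (2 * σy * σz * Real.cosh ((σy / σz) * T)) = 0) ∧
    (∀ A : ℝ → ℝ,
      (∀ t ∈ Icc (0 : ℝ) T,
        HasDerivAt A
          (1 / (2 * σz ^ 2) + (2 * σy / σz) * Real.tanh ((σy / σz) * t) * A t) t) →
      A T = 0 →
      ∀ t ∈ Icc (0 : ℝ) T,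
        A t = -Real.sinh ((σy / σz) * (T - t)) * Real.cosh ((σy / σz) * t)
            / (2 * σy * σz * Real.cosh ((σy / σz) * T))) := by
  have hsol := fun t => hasDerivAt_neg_sinh_mul_cosh_div (σy / σz) (2 * σy * σz) T t (by positivity)
  have hconst : σy / σz / (2 * σy * σz) = 1 / (2 * σz ^ 2) := by field_simp
  have hcoeff : 2 * (σy / σz) = 2 * σy / σz := (mul_div_assoc _ _ _).symm
  simp only [hconst, hcoeff] at hsol
  have hterminal : -sinh (σy / σz * (T - T)) * cosh (σy / σz * T)
      / (2 * σy * σz * cosh (σy / σz * T)) = 0 := by simp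
  refine ⟨fun t _ => hsol t, hterminal, fun A hA hAT => ?_⟩
  exact eqOn_Icc_of_hasDerivAt_affine_of_right_eq (fun t _ => nnnorm_mul_tanh_le _ _) hA
    (fun t _ => hsol t) (hAT.trans hterminal.symm)

/-- The unique solution on `[0,T]` of the linear ODE
`A'(t) = 1/(2σ_z²) + (2σ_y/σ_z) tanh((σ_y/σ_z)t) A(t)` with `A(T) = 0` is
`A(t) = -sinh((σ_y/σ_z)(T-t)) cosh((σ_y/σ_z)t) / (2σ_yσ_z cosh((σ_y/σ_z)T))`. -/
theorem linear_ode_uninformed_A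
    (σy σz T : ℝ) (hy : 0 < σy) (hz : 0 < σz) (hT : 0 < T) :
    (∀ t ∈ Icc (0 : ℝ) T,
      HasDerivAt
        (fun t : ℝ => -Real.sinh ((σy / σz) * (T - t)) * Real.cosh ((σy / σz) * t)
            / (2 * σy * σz * Real.cosh ((σy / σz) * T)))
        (1 / (2 * σz ^ 2) + (2 * σy / σz) * Real.tanh ((σy / σz) * t)
          * (-Real.sinh ((σy / σz) * (T - t)) * Real.cosh ((σy / σz) * t)
              / (2 * σy * σz * Real.cosh ((σy / σz) * T)))) t) ∧
    (-Real.sinh ((σy / σz) * (T - T)) * Real.cosh ((σy / σz) * T)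
        / (2 * σy * σz * Real.cosh ((σy / σz) * T)) = 0) ∧
    (∀ A : ℝ → ℝ,
      (∀ t ∈ Icc (0 : ℝ) T,
        HasDerivAt A
          (1 / (2 * σz ^ 2) + (2 * σy / σz) * Real.tanh ((σy / σz) * t) * A t) t) →
      A T = 0 →
      ∀ t ∈ Icc (0 : ℝ) T,
        A t = -Real.sinh ((σy / σz) * (T - t)) * Real.cosh ((σy / σz) * t)
            / (2 * σy * σz * Real.cosh ((σy / σz) * T))) :=
  linear_ode_uninformed_A_general σy σz T hy hz
end

section
/- With A_{UI}(t) = -sinh(k(T-t))cosh(kt)/(2σ_yσ_z cosh(kT)) where k = σ_y/σ_z, the unique solution on [0,T] of B'(t) = -σ_y²·tanh²(kt)·A_{UI}(t) with B(T) = 0 is B_{UI}(t) = (σ_y/(4σ_z))(T-t)tanh(kT) + (1/2)log(cosh(kt)/cosh(kT)) + sinh(k(T-t))sinh(kt)/(4cosh(kT)). -/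
/-! Differentiating `B_UI` term by term gives `-σ_y² tanh²(kt) A_UI(t)` once `cosh² = sinh² + 1` is used.
Uniqueness: two solutions differ by a function with zero derivative on `[0, T]`, hence by a constant,
which vanishes at `T`. -/

open Real Set

theorem eqOn_Icc_of_hasDerivAt_of_eq_right {E : Type*} [NormedAddCommGroup E] [NormedSpace ℝ E]
    {f g f' : ℝ → E} {a b : ℝ}
    (hf : ∀ x ∈ Icc a b, HasDerivAt f (f' x) x) (hg : ∀ x ∈ Icc a b, HasDerivAt g (f' x) x)
    (hb : f b = g b) : EqOn f g (Icc a b) := by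
  have hzero : ∀ x ∈ Icc a b, HasDerivAt (f - g) 0 x := fun x hx => by
    simpa using (hf x hx).sub (hg x hx)
  have hconst := constant_of_has_deriv_right_zero
    (fun x hx => (hzero x hx).continuousAt.continuousWithinAt)
    (fun x hx => (hzero x (Ico_subset_Icc_self hx)).hasDerivWithinAt)
  intro x hx
  have hbmem : b ∈ Icc a b := ⟨hx.1.trans hx.2, le_rfl⟩
  refine sub_eq_zero.mp ?_
  calc f x - g x = (f - g) b := (hconst x hx).trans (hconst b hbmem).symm
    _ = 0 := sub_eq_zero.mpr hb

theorem hasDerivAt_uninformedB (k T t : ℝ) :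
    HasDerivAt (fun s => k / 4 * (T - s) * tanh (k * T) + 1 / 2 * log (cosh (k * s) / cosh (k * T))
        + sinh (k * (T - s)) * sinh (k * s) / (4 * cosh (k * T)))
      (k * tanh (k * t) ^ 2 * sinh (k * (T - t)) * cosh (k * t) / (2 * cosh (k * T))) t := by
  have hct : cosh (k * t) ≠ 0 := (cosh_pos _).ne'
  have hcT : cosh (k * T) ≠ 0 := (cosh_pos _).ne'
  have hlin : HasDerivAt (fun s => k * s) k t := by simpa using (hasDerivAt_id t).const_mul k
  have hrev : HasDerivAt (fun s => k * (T - s)) (-k) t := by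
    simpa using ((hasDerivAt_id t).const_sub T).const_mul k
  have hdrift :
      HasDerivAt (fun s => k / 4 * (T - s) * tanh (k * T)) (-(k / 4) * tanh (k * T)) t := by
    simpa using (((hasDerivAt_id t).const_sub T).const_mul (k / 4)).mul_const (tanh (k * T))
  have hlog : HasDerivAt (fun s => 1 / 2 * log (cosh (k * s) / cosh (k * T)))
      (1 / 2 * (sinh (k * t) * k / cosh (k * T) / (cosh (k * t) / cosh (k * T)))) t :=
    ((((hasDerivAt_cosh _).comp t hlin).div_const _).log (div_ne_zero hct hcT)).const_mul _
  have hprod : HasDerivAt (fun s => sinh (k * (T - s)) * sinh (k * s) / (4 * cosh (k * T)))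
      ((cosh (k * (T - t)) * -k * sinh (k * t) + sinh (k * (T - t)) * (cosh (k * t) * k))
        / (4 * cosh (k * T))) t :=
    (((hasDerivAt_sinh _).comp t hrev).mul ((hasDerivAt_sinh _).comp t hlin)).div_const _
  refine ((hdrift.add hlog).add hprod).congr_deriv ?_
  rw [mul_sub k T t, sinh_sub, cosh_sub, tanh_eq_sinh_div_cosh, tanh_eq_sinh_div_cosh]
  field_simp
  linear_combination
    (2 * sinh (k * T) * cosh (k * t) - 4 * cosh (k * T) * sinh (k * t)) * k * cosh_sq (k * t)

theorem linear_ode_uninformed_B_general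
    (σy σz T : ℝ) :
    let k := σy / σz
    let AUI : ℝ → ℝ := fun t =>
      -Real.sinh (k * (T - t)) * Real.cosh (k * t) / (2 * σy * σz * Real.cosh (k * T))
    let BUI : ℝ → ℝ := fun t =>
      (σy / (4 * σz)) * (T - t) * Real.tanh (k * T)
        + (1 / 2) * Real.log (Real.cosh (k * t) / Real.cosh (k * T))
        + Real.sinh (k * (T - t)) * Real.sinh (k * t) / (4 * Real.cosh (k * T))
    (∀ t ∈ Icc (0 : ℝ) T,
      HasDerivAt BUI (-σy ^ 2 * Real.tanh (k * t) ^ 2 * AUI t) t) ∧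
    BUI T = 0 ∧
    (∀ B : ℝ → ℝ,
      (∀ t ∈ Icc (0 : ℝ) T,
        HasDerivAt B (-σy ^ 2 * Real.tanh (k * t) ^ 2 * AUI t) t) →
      B T = 0 →
      ∀ t ∈ Icc (0 : ℝ) T, B t = BUI t) := by
  intro k AUI BUI
  have hderiv (t : ℝ) : HasDerivAt BUI (-σy ^ 2 * tanh (k * t) ^ 2 * AUI t) t := by
    convert hasDerivAt_uninformedB k T t using 1
    · funext s
      simp only [BUI, k]
      ring
    · simp only [AUI, k]
      field_simp
  have hBT : BUI T = 0 := by simp [BUI]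
  exact ⟨fun t _ => hderiv t, hBT, fun B hB hBT' =>
    eqOn_Icc_of_hasDerivAt_of_eq_right hB (fun t _ => hderiv t) (hBT'.trans hBT.symm)⟩

/-- With `k = σ_y/σ_z` and `A_UI(t) = -sinh(k(T-t))cosh(kt)/(2σ_yσ_z cosh(kT))`,
the unique solution on `[0,T]` of `B'(t) = -σ_y² tanh²(kt) A_UI(t)` with `B(T)=0` is
`B_UI(t) = (σ_y/(4σ_z))(T-t)tanh(kT) + (1/2)log(cosh(kt)/cosh(kT))
  + sinh(k(T-t))sinh(kt)/(4cosh(kT))`. -/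
theorem linear_ode_uninformed_B
    (σy σz T : ℝ) (hy : 0 < σy) (hz : 0 < σz) (hT : 0 < T) :
    let k := σy / σz
    let AUI : ℝ → ℝ := fun t =>
      -Real.sinh (k * (T - t)) * Real.cosh (k * t) / (2 * σy * σz * Real.cosh (k * T))
    let BUI : ℝ → ℝ := fun t =>
      (σy / (4 * σz)) * (T - t) * Real.tanh (k * T)
        + (1 / 2) * Real.log (Real.cosh (k * t) / Real.cosh (k * T))
        + Real.sinh (k * (T - t)) * Real.sinh (k * t) / (4 * Real.cosh (k * T))
    (∀ t ∈ Icc (0 : ℝ) T,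
      HasDerivAt BUI (-σy ^ 2 * Real.tanh (k * t) ^ 2 * AUI t) t) ∧
    BUI T = 0 ∧
    (∀ B : ℝ → ℝ,
      (∀ t ∈ Icc (0 : ℝ) T,
        HasDerivAt B (-σy ^ 2 * Real.tanh (k * t) ^ 2 * AUI t) t) →
      B T = 0 →
      ∀ t ∈ Icc (0 : ℝ) T, B t = BUI t) :=
  linear_ode_uninformed_B_general σy σz T
end

section
/- Let k = σ_y/σ_z, B_I(t) = -(1/2)log cosh(k(T-t)) and B_{UI}(t) = (σ_y/(4σ_z))(T-t)tanh(kT) + (1/2)log(cosh(kt)/cosh(kT)) + sinh(k(T-t))sinh(kt)/(4cosh(kT)). Then B_{UI}(0) - B_I(0) = (σ_y T/(4σ_z))·tanh((σ_y/σ_z)T), and consequently the continuous-time indifference price is Ĉ(0;T) = (σ_y T/(4γσ_z))·tanh((σ_y/σ_z)T) ≥ 0. -/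
open Real

/-- `B_UI(0) - B_I(0) = (σ_y T/(4σ_z)) tanh((σ_y/σ_z)T)`; consequently the
continuous-time indifference price is `Ĉ(0;T) = (σ_y T/(4γσ_z)) tanh((σ_y/σ_z)T) ≥ 0`,
equating the time-0 informed and uninformed value functions. -/
theorem continuous_time_indifference_price
    (σy σz γ T μ x y : ℝ) (hy : 0 < σy) (hz : 0 < σz) (hγ : 0 < γ) (hT : 0 < T) :
    let k := σy / σz
    let BI : ℝ → ℝ := fun t => -(1 / 2) * Real.log (Real.cosh (k * (T - t)))
    let BUI : ℝ → ℝ := fun t =>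
      (σy / (4 * σz)) * (T - t) * Real.tanh (k * T)
        + (1 / 2) * Real.log (Real.cosh (k * t) / Real.cosh (k * T))
        + Real.sinh (k * (T - t)) * Real.sinh (k * t) / (4 * Real.cosh (k * T))
    let A0 : ℝ := -(1 / (2 * σy * σz)) * Real.tanh (k * T)
    let C : ℝ := (σy * T / (4 * γ * σz)) * Real.tanh (k * T)
    BUI 0 - BI 0 = (σy * T / (4 * σz)) * Real.tanh (k * T) ∧
    0 ≤ C ∧
    -Real.exp (-γ * (x - C) + A0 * (μ + y) ^ 2 + BI 0)
      = -Real.exp (-γ * x + A0 * (μ + y) ^ 2 + BUI 0) := by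
  intro k BI BUI A0 C
  have hk : 0 < k := div_pos hy hz
  have hkT : 0 ≤ k * T := le_of_lt (mul_pos hk hT)
  have hc : (0:ℝ) < Real.cosh (k * T) := Real.cosh_pos _
  have hdiff : BUI 0 - BI 0 = (σy * T / (4 * σz)) * Real.tanh (k * T) := by
    simp only [BUI, BI]
    rw [show k * (0:ℝ) = 0 by ring, Real.cosh_zero, Real.sinh_zero,
      Real.log_div one_ne_zero hc.ne', Real.log_one]
    ring
  have htanh : 0 ≤ Real.tanh (k * T) := by
    rw [Real.tanh_eq_sinh_div_cosh]
    exact div_nonneg (Real.sinh_nonneg_iff.mpr hkT) hc.le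
  refine ⟨hdiff, ?_, ?_⟩
  · apply mul_nonneg _ htanh
    positivity
  · congr 1
    have hγC : γ * C = (σy * T / (4 * σz)) * Real.tanh (k * T) := by
      simp only [C]; field_simp
    have : BUI 0 = BI 0 + γ * C := by rw [hγC, ← hdiff]; ring
    rw [this]; ring
end

section
/- The function κ(t,u) = -σ_y·tanh((σ_y/σ_z)u)·1_{[0,t]}(u) satisfies the integral equation σ_z·κ(t,u) - ∫₀ᵘ κ(t,v)κ(u,v) dv = -σ_y²·u for all 0 ≤ u ≤ t ≤ T. -/
/-!
For `0 ≤ v ≤ u ≤ t` both factors `κ t v` and `κ u v` equal `-σy tanh (k v)` with `k = σy / σz`,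
so the equation reduces to `σy² ∫₀ᵘ tanh² (k v) dv = σy σz (k u - tanh (k u))`. This holds because
`tanh' = 1 - tanh²` makes `v ↦ k v - tanh (k v)` an antiderivative of `k tanh² (k v)`.
-/

open Real Set intervalIntegral

theorem Real.hasDerivAt_tanh (x : ℝ) : HasDerivAt tanh (1 - tanh x ^ 2) x := by
  have hcosh : cosh x ≠ 0 := (cosh_pos x).ne'
  rw [show tanh = fun y => sinh y / cosh y from funext tanh_eq_sinh_div_cosh]
  refine ((hasDerivAt_sinh x).div (hasDerivAt_cosh x) hcosh).congr_deriv ?_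
  rw [div_pow, one_sub_div (pow_ne_zero 2 hcosh)]
  ring

theorem Real.continuous_tanh : Continuous tanh :=
  continuous_iff_continuousAt.2 fun x => (hasDerivAt_tanh x).continuousAt

theorem integral_mul_tanh_mul_sq (k a b : ℝ) :
    ∫ v in a..b, k * tanh (k * v) ^ 2 = (k * b - tanh (k * b)) - (k * a - tanh (k * a)) := by
  have hderiv (v : ℝ) :
      HasDerivAt (fun v => k * v - tanh (k * v)) (k * tanh (k * v) ^ 2) v := by
    have hlin : HasDerivAt (fun v => k * v) k v := by simpa using (hasDerivAt_id v).const_mul k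
    exact (hlin.sub ((hasDerivAt_tanh (k * v)).comp v hlin)).congr_deriv (by ring)
  refine integral_eq_sub_of_hasDerivAt (fun v _ => hderiv v) ?_
  exact (continuous_const.mul ((continuous_tanh.comp (continuous_const.mul continuous_id)).pow 2))
    |>.intervalIntegrable a b

theorem filtering_kernel_equation_general
    (σy σz T : ℝ) (hz : 0 < σz) :
    let κ : ℝ → ℝ → ℝ := fun t u =>
      Set.indicator (Icc (0 : ℝ) t) (fun u => -σy * Real.tanh ((σy / σz) * u)) u
    ∀ u t : ℝ, 0 ≤ u → u ≤ t → t ≤ T →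
      σz * κ t u - ∫ v in (0 : ℝ)..u, κ t v * κ u v = -σy ^ 2 * u := by
  intro κ u t hu hut _
  set k := σy / σz
  have hk : σz * k = σy := mul_div_cancel₀ σy hz.ne'
  have hκ (s v : ℝ) (hv : v ∈ Icc 0 s) : κ s v = -σy * tanh (k * v) := indicator_of_mem hv _
  clear_value k
  have hintegral : ∫ v in (0 : ℝ)..u, κ t v * κ u v
      = σy * σz * ∫ v in (0 : ℝ)..u, k * tanh (k * v) ^ 2 := by
    rw [← integral_const_mul]
    refine integral_congr fun v hv => ?_
    rw [uIcc_of_le hu] at hv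
    rw [hκ t v ⟨hv.1, hv.2.trans hut⟩, hκ u v hv]
    linear_combination (-σy * tanh (k * v) ^ 2) * hk
  rw [hκ t u ⟨hu, hut⟩, hintegral, integral_mul_tanh_mul_sq, mul_zero, tanh_zero, sub_zero]
  linear_combination (-σy * u) * hk

/-- The kernel `κ(t,u) = -σ_y tanh((σ_y/σ_z)u) 1_{[0,t]}(u)` solves the Volterra
integral equation `σ_z κ(t,u) - ∫₀ᵘ κ(t,v)κ(u,v) dv = -σ_y² u` for `0 ≤ u ≤ t ≤ T`. -/
theorem filtering_kernel_equation
    (σy σz T : ℝ) (hy : 0 < σy) (hz : 0 < σz) (hT : 0 < T) :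
    let κ : ℝ → ℝ → ℝ := fun t u =>
      Set.indicator (Icc (0 : ℝ) t) (fun u => -σy * Real.tanh ((σy / σz) * u)) u
    ∀ u t : ℝ, 0 ≤ u → u ≤ t → t ≤ T →
      σz * κ t u - ∫ v in (0 : ℝ)..u, κ t v * κ u v = -σy ^ 2 * u :=
  filtering_kernel_equation_general σy σz T hz
end

section
/- The function B_F(t) = γ∫_{τ_ℓ}^T c(u) du + γ∫_t^{τ_ℓ} (c̄ - ℓ(u)) du + (1/2)log(cosh(kt)/cosh(kT)) satisfies the ODE B_F'(t) = -σ_y² tanh²(kt)·A_{UI}(t) on [0, τ_ℓ], where A_{UI}(t) = -sinh(k(T-t))cosh(kt)/(2σ_yσ_z cosh(kT)), c̄ = (σ_y/(4γσ_z))tanh(kT), ℓ(t) = σ_y sinh(k(T-2t))/(4γσ_z cosh(kT)), and k = σ_y/σ_z. -/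
open Real Set intervalIntegral

/-!
Differentiating `B_F` gives `-γ (c̄ - ℓ(t)) + (k/2) tanh(kt)`: the first term by the fundamental
theorem of calculus, the second because `(log cosh)' = tanh`. Writing `x = kt`, `y = kT` and
clearing the common factor `k / (4 cosh y)`, the claimed ODE becomes a hyperbolic identity in
`x, y` that follows from `cosh y = cosh(y - x) cosh x + sinh(y - x) sinh x`.
-/

theorem sinh_sub_two_mul_sub_sinh_add_two_mul_tanh_mul_cosh (x y : ℝ) :
    sinh (y - 2 * x) - sinh y + 2 * tanh x * cosh y = 2 * tanh x * sinh x * sinh (y - x) := by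
  have hx : cosh x ≠ 0 := (cosh_pos x).ne'
  rw [tanh_eq_sinh_div_cosh, two_mul, ← sub_sub, sinh_sub, cosh_sub, sinh_sub]
  field_simp
  linear_combination (cosh x * sinh y - 2 * cosh y * sinh x) * cosh_sq_sub_sinh_sq x

theorem hasDerivAt_log_cosh_mul_div (k a t : ℝ) (ha : a ≠ 0) :
    HasDerivAt (fun s => log (cosh (k * s) / a)) (k * tanh (k * t)) t := by
  have h := (((hasDerivAt_id' t).const_mul k).cosh.div_const a).log
    (div_ne_zero (cosh_pos _).ne' ha)
  rw [tanh_eq_sinh_div_cosh]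
  convert h using 1
  field_simp

theorem BF_solves_continuation_ode_general
    (σy σz γ T τℓ : ℝ) (hy : 0 < σy) (hz : 0 < σz) (hγ : 0 < γ) (c : ℝ → ℝ) :
    let k := σy / σz
    let cbar : ℝ := (σy / (4 * γ * σz)) * Real.tanh (k * T)
    let ℓ : ℝ → ℝ := fun t =>
      σy * Real.sinh (k * (T - 2 * t)) / (4 * γ * σz * Real.cosh (k * T))
    let AUI : ℝ → ℝ := fun t =>
      -Real.sinh (k * (T - t)) * Real.cosh (k * t) / (2 * σy * σz * Real.cosh (k * T))
    let BF : ℝ → ℝ := fun t =>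
      γ * (∫ u in τℓ..T, c u) + γ * (∫ u in t..τℓ, (cbar - ℓ u))
        + (1 / 2) * Real.log (Real.cosh (k * t) / Real.cosh (k * T))
    ∀ t ∈ Icc (0 : ℝ) τℓ,
      HasDerivAt BF (-σy ^ 2 * Real.tanh (k * t) ^ 2 * AUI t) t := by
  intro k cbar ℓ AUI BF t _
  have hcont : Continuous fun u => cbar - ℓ u := by fun_prop
  have hint : HasDerivAt (fun s => ∫ u in s..τℓ, (cbar - ℓ u)) (-(cbar - ℓ t)) t :=
    integral_hasDerivAt_left (hcont.intervalIntegrable _ _) (hcont.stronglyMeasurableAtFilter _ _)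
      hcont.continuousAt
  have hBF : HasDerivAt BF (γ * -(cbar - ℓ t) + 1 / 2 * (k * tanh (k * t))) t :=
    ((hint.const_mul γ).const_add _).add
      ((hasDerivAt_log_cosh_mul_div k _ t (cosh_pos _).ne').const_mul (1 / 2))
  convert hBF using 1
  simp only [AUI, cbar, ℓ]
  rw [show k * (T - t) = k * T - k * t by ring, show k * (T - 2 * t) = k * T - 2 * (k * t) by ring]
  have hid := sinh_sub_two_mul_sub_sinh_add_two_mul_tanh_mul_cosh (k * t) (k * T)
  generalize k * t = x at hid ⊢
  generalize k * T = y at hid ⊢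
  have hcx := (cosh_pos x).ne'
  have hcy := (cosh_pos y).ne'
  simp only [k, tanh_eq_sinh_div_cosh] at hid ⊢
  field_simp at hid ⊢
  linear_combination (-2) * hid

/-- The candidate value-function coefficient
`B_F(t) = γ∫_{τ_ℓ}^T c + γ∫_t^{τ_ℓ}(c̄ - ℓ) + (1/2)log(cosh(kt)/cosh(kT))` solves the
continuation-region ODE `B_F'(t) = -σ_y² tanh²(kt) A_UI(t)` on `[0,τ_ℓ]`. -/
theorem BF_solves_continuation_ode
    (σy σz γ T τℓ : ℝ) (hy : 0 < σy) (hz : 0 < σz) (hγ : 0 < γ) (hT : 0 < T)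
    (hτ : τℓ ∈ Icc (0 : ℝ) T) (c : ℝ → ℝ) (hc : ContinuousOn c (Icc 0 T)) :
    let k := σy / σz
    let cbar : ℝ := (σy / (4 * γ * σz)) * Real.tanh (k * T)
    let ℓ : ℝ → ℝ := fun t =>
      σy * Real.sinh (k * (T - 2 * t)) / (4 * γ * σz * Real.cosh (k * T))
    let AUI : ℝ → ℝ := fun t =>
      -Real.sinh (k * (T - t)) * Real.cosh (k * t) / (2 * σy * σz * Real.cosh (k * T))
    let BF : ℝ → ℝ := fun t =>
      γ * (∫ u in τℓ..T, c u) + γ * (∫ u in t..τℓ, (cbar - ℓ u))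
        + (1 / 2) * Real.log (Real.cosh (k * t) / Real.cosh (k * T))
    ∀ t ∈ Icc (0 : ℝ) τℓ,
      HasDerivAt BF (-σy ^ 2 * Real.tanh (k * t) ^ 2 * AUI t) t :=
  BF_solves_continuation_ode_general σy σz γ T τℓ hy hz hγ c
end
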